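/- Every M ∈ P_{W,r}, where P_{W,r} is a pencil in M_{m,(m+n)}(ℝ) with W rational and r ≥ 1, satisfies β(M) ≥ (dim W)/r − 1. -/

import Mathlib

open scoped ENNReal

noncomputable def euclNorm {d : ℕ} (v : Fin d → ℝ) : ℝ :=
  ‖(WithLp.equiv 2 (Fin d → ℝ)).symm v‖

lemma euclNorm_eq {d : ℕ} (v : Fin d → ℝ) :
    euclNorm v = ‖(WithLp.linearEquiv 2 ℝ (Fin d → ℝ)).symm v‖ := rfl

lemma euclNorm_nonneg {d : ℕ} (v : Fin d → ℝ) : 0 ≤ euclNorm v := norm_nonneg _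

lemma euclNorm_pos {d : ℕ} {v : Fin d → ℝ} (hv : v ≠ 0) : 0 < euclNorm v := by
  rw [euclNorm_eq, norm_pos_iff]
  intro h
  exact hv ((WithLp.linearEquiv 2 ℝ (Fin d → ℝ)).symm.injective (by simpa using h))

lemma euclNorm_sum_smul_le {d : ℕ} {ι : Type*} (s : Finset ι) (c : ι → ℝ) (u : ι → (Fin d → ℝ)) :
    euclNorm (∑ i ∈ s, c i • u i) ≤ ∑ i ∈ s, |c i| * euclNorm (u i) := by
  rw [euclNorm_eq, map_sum]
  refine (norm_sum_le _ _).trans ?_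
  refine Finset.sum_le_sum fun i _ => ?_
  rw [map_smul, norm_smul, Real.norm_eq_abs, euclNorm_eq]

lemma abs_sub_lt_of_floor_div_eq {x y δ : ℝ} (hδ : 0 < δ) (h : ⌊x/δ⌋ = ⌊y/δ⌋) : |x - y| < δ := by
  have h1 := Int.sub_one_lt_floor (x/δ)
  have h2 := Int.floor_le (x/δ)
  have h3 := Int.sub_one_lt_floor (y/δ)
  have h4 := Int.floor_le (y/δ)
  rw [← h] at h3 h4
  have hq : |x/δ - y/δ| < 1 := by rw [abs_sub_lt_iff]; constructor <;> linarith
  have hxy : x - y = δ * (x/δ - y/δ) := by field_simp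
  rw [hxy, abs_mul, abs_of_pos hδ]
  calc δ * |x/δ - y/δ| < δ * 1 := mul_lt_mul_of_pos_left hq hδ
  _ = δ := by ring

def approxSet (m n : ℕ) (M : Matrix (Fin m) (Fin (m + n)) ℝ) (b : ℝ) :
    Set (Fin (m + n) → ℤ) :=
  {q | euclNorm (M.mulVec fun i => (q i : ℝ)) < euclNorm (fun i => ((q i : ℝ))) ^ (-b)}

noncomputable def dioExp (m n : ℕ) (M : Matrix (Fin m) (Fin (m + n)) ℝ) : ℝ≥0∞ :=
  sSup {x : ℝ≥0∞ | ∃ b : ℝ, 0 ≤ b ∧ x = ENNReal.ofReal b ∧ (approxSet m n M b).Infinite}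

def IsRationalSubspace {d : ℕ} (W : Submodule ℝ (Fin d → ℝ)) : Prop :=
  ∃ s : Set (Fin d → ℚ), W = Submodule.span ℝ ((fun v : Fin d → ℚ => fun i => ((v i : ℝ))) '' s)

def pencil (m n : ℕ) (W : Submodule ℝ (Fin (m + n) → ℝ)) (r : ℕ) :
    Set (Matrix (Fin m) (Fin (m + n)) ℝ) :=
  {M | Module.finrank ℝ (W.map M.mulVecLin) ≤ r}

open Module Filter

lemma int_multiple_of_rat {d : ℕ} (v : Fin d → ℚ) :
    ∃ (c : ℝ) (z : Fin d → ℤ), 0 < c ∧ (fun k => ((z k : ℝ))) = c • (fun k => ((v k : ℝ))) := by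
  classical
  set D : ℕ := (Finset.univ : Finset (Fin d)).lcm fun k => (v k).den with hD
  have hD0 : D ≠ 0 := by
    intro h
    rw [hD] at h
    have := Finset.lcm_eq_zero_iff.mp h
    simp only [Set.mem_image, Finset.mem_coe, Finset.mem_univ] at this
    obtain ⟨k, -, hk⟩ := this
    exact (v k).den_nz hk
  refine ⟨D, fun k => ((D : ℚ) * v k).num, by positivity, ?_⟩
  funext k
  have hdvd : (v k).den ∣ D := Finset.dvd_lcm (Finset.mem_univ k)
  have hden : ((D : ℚ) * v k).den = 1 := by
    obtain ⟨mm, hm⟩ := hdvd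
    have : (D : ℚ) * v k = ((v k).num * mm : ℤ) := by
      have hq : ((v k).den : ℚ) * v k = (v k).num := by
        rw [mul_comm]; exact_mod_cast Rat.mul_den_eq_num _
      push_cast [hm]
      linear_combination (mm : ℚ) * hq
    rw [this, Rat.den_intCast]
  have : (((D : ℚ) * v k).num : ℚ) = (D : ℚ) * v k := by
    rw [← Rat.den_eq_one_iff]
    exact hden
  have := congrArg (fun q : ℚ => (q : ℝ)) this
  push_cast at this ⊢
  simpa using this

lemma exists_int_spanning {d : ℕ} (W : Submodule ℝ (Fin d → ℝ)) (hW : IsRationalSubspace W) :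
    ∃ e : Fin (finrank ℝ W) → (Fin d → ℤ),
      LinearIndependent ℝ (fun i => fun k => ((e i k : ℝ))) ∧
      ∀ i, (fun k => ((e i k : ℝ))) ∈ W := by
  classical
  obtain ⟨s, hs⟩ := hW
  set S : Set (Fin d → ℝ) := (fun v : Fin d → ℚ => fun i => ((v i : ℝ))) '' s with hS
  obtain ⟨t, hts, hspan, hli⟩ := exists_linearIndependent ℝ S
  have htW : Submodule.span ℝ t = W := by rw [hspan, ← hs]
  have htfin : t.Finite := hli.setFinite
  haveI : Fintype t := htfin.fintype
  have hcard : t.toFinset.card = finrank ℝ W := by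
    rw [← htW]; exact (finrank_span_set_eq_card hli).symm
  have hcard2 : Fintype.card t = finrank ℝ W := by rw [← hcard, Set.toFinset_card]
  let g : Fin (finrank ℝ W) ≃ t := (Fintype.equivFinOfCardEq hcard2).symm
  have hmemW : ∀ x ∈ t, x ∈ W := fun x hx => htW ▸ Submodule.subset_span hx
  have hrat : ∀ i : Fin (finrank ℝ W), ∃ (c : ℝ) (z : Fin d → ℤ),
      0 < c ∧ (fun k => ((z k : ℝ))) = c • ((g i : Fin d → ℝ)) := by
    intro i
    have : (g i : Fin d → ℝ) ∈ S := hts (g i).2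
    obtain ⟨v, -, hv⟩ := this
    obtain ⟨c, z, hc, hz⟩ := int_multiple_of_rat v
    exact ⟨c, z, hc, by rw [hz]; exact congrArg (fun x => c • x) hv⟩
  choose c z hc hz using hrat
  refine ⟨z, ?_, ?_⟩
  · have hli' : LinearIndependent ℝ (fun i : Fin (finrank ℝ W) => (g i : Fin d → ℝ)) :=
      hli.comp g g.injective
    have := hli'.units_smul (fun i => Units.mk0 (c i) (ne_of_gt (hc i)))
    convert this using 1
    funext i
    rw [hz i]
    rfl
  · intro i
    rw [hz i]
    exact Submodule.smul_mem _ _ (hmemW _ (g i).2)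

set_option maxHeartbeats 1000000 in
lemma pigeon {m n : ℕ} (M : Matrix (Fin m) (Fin (m + n)) ℝ) (W : Submodule ℝ (Fin (m+n) → ℝ))
    (hW : IsRationalSubspace W) (b : ℝ) (hb : 0 < b)
    (hbw : (1 + b) * (finrank ℝ (W.map M.mulVecLin) : ℝ) < (finrank ℝ W : ℝ)) :
    ∀ᶠ N : ℕ in atTop, ∃ q : Fin (m+n) → ℤ, q ≠ 0 ∧
      euclNorm (M.mulVec fun i => ((q i : ℝ))) < euclNorm (fun i => ((q i : ℝ))) ^ (-b) ∧
      euclNorm (M.mulVec fun i => ((q i : ℝ))) < (N : ℝ) ^ (-b) := by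
  classical
  set w := finrank ℝ W with hw
  obtain ⟨e, he_li, he_mem⟩ := exists_int_spanning W hW
  set V := W.map M.mulVecLin with hVdef
  set ρ := finrank ℝ V with hρ
  let ev : Fin w → (Fin (m+n) → ℝ) := fun i k => (e i k : ℝ)
  have hu : ∀ i, M.mulVec (ev i) ∈ V := fun i =>
    Submodule.mem_map.mpr ⟨ev i, he_mem i, by rw [Matrix.mulVecLin_apply]⟩
  let u : Fin w → V := fun i => ⟨M.mulVec (ev i), hu i⟩
  let v : Basis (Fin ρ) ℝ V := Module.finBasis ℝ V
  set C : ℝ := (∑ j, ∑ i, |v.repr (u i) j|) + 1 with hCdef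
  set C1 : ℝ := (∑ i, euclNorm (ev i)) + 1 with hC1def
  set C2 : ℝ := (∑ j, euclNorm ((v j : Fin m → ℝ))) + 1 with hC2def
  have hC : 1 ≤ C := le_add_of_nonneg_left (by positivity)
  have hC1 : 1 ≤ C1 := le_add_of_nonneg_left
    (Finset.sum_nonneg fun i _ => euclNorm_nonneg _)
  have hC2 : 1 ≤ C2 := le_add_of_nonneg_left
    (Finset.sum_nonneg fun j _ => euclNorm_nonneg _)
  set ε : ℝ := (w : ℝ) - (1+b) * ρ with hεdef
  have hε : 0 < ε := by rw [hεdef]; linarith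
  set A' : ℝ := 2 * (2 * C2 * C * C1 ^ b) + 3 with hA'def
  have hCpos : (0:ℝ) < C := lt_of_lt_of_le one_pos hC
  have hC1pos : (0:ℝ) < C1 := lt_of_lt_of_le one_pos hC1
  have hC2pos : (0:ℝ) < C2 := lt_of_lt_of_le one_pos hC2
  have hA' : 1 ≤ A' := by
    have h1 : (0:ℝ) < C1 ^ b := Real.rpow_pos_of_pos hC1pos b
    nlinarith [mul_pos (mul_pos (mul_pos (by norm_num : (0:ℝ) < 2) hC2pos) hCpos) h1]
  have hA'pos : (0:ℝ) < A' := lt_of_lt_of_le one_pos hA'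
  have hevε : ∀ᶠ N : ℕ in atTop, A' ^ ρ < (N:ℝ) ^ ε :=
    ((tendsto_rpow_atTop hε).comp tendsto_natCast_atTop_atTop).eventually_gt_atTop (A' ^ ρ)
  filter_upwards [eventually_ge_atTop 1, hevε] with N hN1 hNε
  have hN0 : (0:ℝ) < N := by exact_mod_cast hN1
  have hN1' : (1:ℝ) ≤ N := by exact_mod_cast hN1
  -- the gap δ
  set δ : ℝ := (C1 * N) ^ (-b) / (2 * C2) with hδdef
  have hC1N : (0:ℝ) < C1 * N := by positivity
  have hδ : 0 < δ := by
    rw [hδdef]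
    have := Real.rpow_pos_of_pos hC1N (-b)
    positivity
  -- the pigeonhole map
  set xa : (Fin w → Fin (N+1)) → V := fun a => ∑ i, ((a i : ℕ) : ℝ) • u i with hxadef
  set F : (Fin w → Fin (N+1)) → (Fin ρ → ℤ) := fun a j => ⌊(v.repr (xa a) j) / δ⌋ with hFdef
  have hrepr_lin : ∀ (a : Fin w → Fin (N+1)) (j : Fin ρ),
      v.repr (xa a) j = ∑ i, ((a i : ℕ) : ℝ) * v.repr (u i) j := by
    intro a j
    rw [hxadef]
    rw [map_sum]
    rw [Finsupp.finset_sum_apply]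
    refine Finset.sum_congr rfl fun i _ => ?_
    rw [map_smul, Finsupp.smul_apply, smul_eq_mul]
  have hrepr_bound : ∀ (a : Fin w → Fin (N+1)) (j : Fin ρ), |v.repr (xa a) j| ≤ N * C := by
    intro a j
    rw [hrepr_lin]
    refine (Finset.abs_sum_le_sum_abs _ _).trans ?_
    have step1 : ∀ i ∈ Finset.univ, |((a i : ℕ) : ℝ) * v.repr (u i) j|
        ≤ (N:ℝ) * |v.repr (u i) j| := by
      intro i _
      rw [abs_mul, abs_of_nonneg (by positivity : (0:ℝ) ≤ ((a i : ℕ) : ℝ))]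
      have : ((a i : ℕ) : ℝ) ≤ N := by exact_mod_cast Fin.is_le (a i)
      exact mul_le_mul_of_nonneg_right this (abs_nonneg _)
    refine (Finset.sum_le_sum step1).trans ?_
    rw [← Finset.mul_sum]
    refine mul_le_mul_of_nonneg_left ?_ (le_of_lt hN0)
    calc (∑ i, |v.repr (u i) j|) ≤ ∑ j', ∑ i, |v.repr (u i) j'| :=
        Finset.single_le_sum (f := fun j' => ∑ i, |v.repr (u i) j'|)
          (fun j' _ => Finset.sum_nonneg fun i _ => abs_nonneg _) (Finset.mem_univ j)
      _ ≤ C := by rw [hCdef]; linarith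
  set K : ℤ := ⌈(N * C) / δ⌉ with hKdef
  have hKnonneg : 0 ≤ K := Int.ceil_nonneg (by positivity)
  have hmaps : ∀ a ∈ (Finset.univ : Finset (Fin w → Fin (N+1))),
      F a ∈ Fintype.piFinset (fun _ : Fin ρ => Finset.Icc (-K) K) := by
    intro a _
    rw [Fintype.mem_piFinset]
    intro j
    rw [Finset.mem_Icc]
    have hb1 := hrepr_bound a j
    rw [abs_le] at hb1
    have h1 : (↑N * C) / δ ≤ (K:ℝ) := Int.le_ceil _
    constructor
    · rw [Int.le_floor]
      have h2 : (-(↑N * C)) / δ ≤ v.repr (xa a) j / δ :=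
        (div_le_div_iff_of_pos_right hδ).mpr hb1.1
      push_cast
      rw [neg_div] at h2
      linarith
    · have h2 : v.repr (xa a) j / δ ≤ (↑N * C) / δ :=
        (div_le_div_iff_of_pos_right hδ).mpr hb1.2
      have h3 : (⌊v.repr (xa a) j / δ⌋ : ℝ) ≤ (K:ℝ) := (Int.floor_le _).trans (h2.trans h1)
      exact_mod_cast h3
  -- cardinality comparison
  have htoNat : ((2*K+1).toNat : ℝ) = 2*(K:ℝ)+1 := by
    have : ((2*K+1).toNat : ℤ) = 2*K+1 := Int.toNat_of_nonneg (by omega)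
    exact_mod_cast this
  have hNb1 : (1:ℝ) ≤ (N:ℝ) ^ (1+b) := Real.one_le_rpow hN1' (by linarith)
  have hδinv : 1/δ = 2*C2*(C1*↑N)^b := by
    rw [hδdef, Real.rpow_neg (le_of_lt hC1N)]
    have h0 : (C1*(N:ℝ))^b ≠ 0 := ne_of_gt (Real.rpow_pos_of_pos hC1N b)
    field_simp
  have hNCδ : ↑N * C / δ = 2*C2*C*C1^b * (N:ℝ)^(1+b) := by
    rw [div_eq_mul_one_div, hδinv, Real.mul_rpow (le_of_lt hC1pos) (le_of_lt hN0),
      Real.rpow_add hN0, Real.rpow_one]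
    ring
  have hKreal : ((2*K+1).toNat : ℝ) ≤ A' * (N:ℝ)^(1+b) := by
    rw [htoNat]
    have h1 : (K:ℝ) ≤ ↑N * C / δ + 1 := le_of_lt (Int.ceil_lt_add_one _)
    rw [hNCδ] at h1
    rw [hA'def]
    linarith
  have hcard : (Fintype.piFinset (fun _ : Fin ρ => Finset.Icc (-K) K)).card
      < (Finset.univ : Finset (Fin w → Fin (N+1))).card := by
    rw [Fintype.card_piFinset]
    have hIcc : ∀ _j : Fin ρ, (Finset.Icc (-K) K).card = (2*K+1).toNat := by
      intro _j
      rw [Int.card_Icc]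
      congr 1
      ring
    rw [Finset.prod_congr rfl (fun j _ => hIcc j), Finset.prod_const, Finset.card_univ,
      Finset.card_univ]
    have hcardfun : Fintype.card (Fin w → Fin (N+1)) = (N+1)^w := by simp
    rw [hcardfun]
    simp only [Fintype.card_fin]
    -- compare via reals
    have hreal : (((2*K+1).toNat)^ρ : ℝ) < ((N+1)^w : ℕ) := by
      have s1 : (((2*K+1).toNat : ℝ))^ρ ≤ (A' * (N:ℝ)^(1+b))^ρ :=
        pow_le_pow_left₀ (by positivity) hKreal ρ
      have s2 : (A' * (N:ℝ)^(1+b))^ρ = A'^ρ * ((N:ℝ)^(1+b))^(ρ:ℕ) := mul_pow _ _ _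
      have s3 : ((N:ℝ)^(1+b))^(ρ:ℕ) = (N:ℝ)^((1+b)*ρ) := by
        rw [← Real.rpow_natCast ((N:ℝ)^(1+b)) ρ, ← Real.rpow_mul (le_of_lt hN0)]
      have s4 : A'^ρ * (N:ℝ)^((1+b)*ρ) < (N:ℝ)^ε * (N:ℝ)^((1+b)*ρ) :=
        mul_lt_mul_of_pos_right hNε (Real.rpow_pos_of_pos hN0 _)
      have s5 : (N:ℝ)^ε * (N:ℝ)^((1+b)*ρ) = (N:ℝ)^(w:ℝ) := by
        rw [← Real.rpow_add hN0]
        congr 1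
        rw [hεdef]; ring
      have s6 : (N:ℝ)^(w:ℝ) = ((N:ℝ))^(w:ℕ) := Real.rpow_natCast _ w
      have s7 : ((N:ℝ))^(w:ℕ) ≤ ((N:ℝ)+1)^(w:ℕ) :=
        pow_le_pow_left₀ (le_of_lt hN0) (by linarith) w
      push_cast
      calc (((2*K+1).toNat : ℝ))^ρ ≤ (A' * (N:ℝ)^(1+b))^ρ := s1
        _ = A'^ρ * (N:ℝ)^((1+b)*ρ) := by rw [s2, s3]
        _ < (N:ℝ)^ε * (N:ℝ)^((1+b)*ρ) := s4
        _ = ((N:ℝ))^(w:ℕ) := by rw [s5, s6]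
        _ ≤ ((N:ℝ)+1)^(w:ℕ) := s7
    exact_mod_cast hreal
  obtain ⟨a, -, a', -, hne, hFeq⟩ := Finset.exists_ne_map_eq_of_card_lt_of_maps_to hcard hmaps
  set q : Fin (m+n) → ℤ := fun k => ∑ i, (((a i : ℕ) : ℤ) - ((a' i : ℕ) : ℤ)) * e i k with hqdef
  have hcastq : (fun k => ((q k : ℝ))) = ∑ i, (((a i:ℕ):ℝ) - ((a' i:ℕ):ℝ)) • ev i := by
    funext k
    rw [Finset.sum_apply]
    rw [hqdef]
    push_cast
    refine Finset.sum_congr rfl fun i _ => ?_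
    simp [ev, smul_eq_mul]
  have hq0 : q ≠ 0 := by
    intro h0
    apply hne
    have hc0 : (fun k => ((q k : ℝ))) = 0 := by rw [h0]; funext k; simp
    rw [hcastq] at hc0
    have hco := Fintype.linearIndependent_iff.mp he_li _ hc0
    funext i
    have := hco i
    have : ((a i : ℕ) : ℝ) = ((a' i : ℕ) : ℝ) := by linarith [this]
    have : (a i : ℕ) = (a' i : ℕ) := by exact_mod_cast this
    exact Fin.ext this
  set y : V := xa a - xa a' with hydef
  have hMq : M.mulVec (fun k => ((q k):ℝ)) = (y : Fin m → ℝ) := by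
    rw [hcastq]
    have lhs : M.mulVec (∑ i, (((a i:ℕ):ℝ) - ((a' i:ℕ):ℝ)) • ev i)
        = ∑ i, (((a i:ℕ):ℝ) - ((a' i:ℕ):ℝ)) • ((u i : Fin m → ℝ)) := by
      rw [← Matrix.mulVecLin_apply, map_sum]
      refine Finset.sum_congr rfl fun i _ => ?_
      rw [map_smul, Matrix.mulVecLin_apply]
    rw [lhs, hydef, hxadef]
    push_cast [Submodule.coe_sub, Submodule.coe_sum, Submodule.coe_smul]
    rw [← Finset.sum_sub_distrib]
    refine Finset.sum_congr rfl fun i _ => ?_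
    rw [sub_smul]
  have hycoord : ∀ j, |v.repr y j| ≤ δ := by
    intro j
    have hsub : v.repr y j = v.repr (xa a) j - v.repr (xa a') j := by
      rw [hydef, map_sub, Finsupp.sub_apply]
    rw [hsub]
    have hfe : ⌊v.repr (xa a) j / δ⌋ = ⌊v.repr (xa a') j / δ⌋ := by
      have := congrFun hFeq j
      rw [hFdef] at this
      exact this
    exact le_of_lt (abs_sub_lt_of_floor_div_eq hδ hfe)
  have hynorm : euclNorm ((y : Fin m → ℝ)) < (C1 * ↑N) ^ (-b) := by
    have hyrepr : (y : Fin m → ℝ) = ∑ j, v.repr y j • ((v j : Fin m → ℝ)) := by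
      conv_lhs => rw [← Basis.sum_repr v y]
      push_cast [Submodule.coe_sum, Submodule.coe_smul]
      rfl
    rw [hyrepr]
    refine lt_of_le_of_lt ((euclNorm_sum_smul_le _ _ _).trans ?_)
      (show δ * (C2-1) < (C1*↑N)^(-b) from ?_)
    · calc ∑ j, |v.repr y j| * euclNorm ((v j : Fin m → ℝ))
          ≤ ∑ j, δ * euclNorm ((v j : Fin m → ℝ)) :=
            Finset.sum_le_sum fun j _ =>
              mul_le_mul_of_nonneg_right (hycoord j) (euclNorm_nonneg _)
        _ = δ * (∑ j, euclNorm ((v j : Fin m → ℝ))) := by rw [Finset.mul_sum]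
        _ = δ * (C2 - 1) := by rw [hC2def]; ring_nf
    · have : δ * (2*C2) = (C1*↑N)^(-b) := by
        rw [hδdef]
        field_simp
      nlinarith [hδ]
  have hMq_lt : euclNorm (M.mulVec fun k => ((q k):ℝ)) < (C1*↑N)^(-b) := by
    rw [hMq]; exact hynorm
  have hcast_ne : (fun k => ((q k):ℝ)) ≠ 0 := by
    intro h
    apply hq0
    funext k
    have h2 : ((q k : ℤ) : ℝ) = 0 := by simpa using congrFun h k
    exact_mod_cast h2
  have hqpos : 0 < euclNorm (fun k => ((q k):ℝ)) := euclNorm_pos hcast_ne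
  have hqnorm : euclNorm (fun k => ((q k):ℝ)) ≤ C1 * ↑N := by
    rw [hcastq]
    refine (euclNorm_sum_smul_le _ _ _).trans ?_
    have step : ∀ i ∈ Finset.univ, |((a i:ℕ):ℝ) - ((a' i:ℕ):ℝ)| * euclNorm (ev i)
        ≤ (N:ℝ) * euclNorm (ev i) := by
      intro i _
      refine mul_le_mul_of_nonneg_right ?_ (euclNorm_nonneg _)
      rw [abs_sub_le_iff]
      have h1 : ((a i : ℕ) : ℝ) ≤ N := by exact_mod_cast Fin.is_le (a i)
      have h2 : ((a' i : ℕ) : ℝ) ≤ N := by exact_mod_cast Fin.is_le (a' i)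
      have h3 : (0:ℝ) ≤ ((a i : ℕ) : ℝ) := by positivity
      have h4 : (0:ℝ) ≤ ((a' i : ℕ) : ℝ) := by positivity
      constructor <;> linarith
    refine (Finset.sum_le_sum step).trans ?_
    rw [← Finset.mul_sum]
    have : (∑ i, euclNorm (ev i)) = C1 - 1 := by rw [hC1def]; ring
    rw [this]
    nlinarith [hN0]
  refine ⟨q, hq0, ?_, ?_⟩
  · refine hMq_lt.trans_le ?_
    exact Real.rpow_le_rpow_of_nonpos hqpos hqnorm (by linarith)
  · refine hMq_lt.trans_le ?_
    exact Real.rpow_le_rpow_of_nonpos hN0 (le_mul_of_one_le_left (le_of_lt hN0) hC1) (by linarith)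

lemma euclNorm_zero {d : ℕ} : euclNorm (0 : Fin d → ℝ) = 0 := by
  rw [euclNorm_eq, map_zero, norm_zero]

lemma infinite_of_small_b {m n : ℕ} (M : Matrix (Fin m) (Fin (m + n)) ℝ)
    (W : Submodule ℝ (Fin (m+n) → ℝ)) (hW : IsRationalSubspace W)
    (b : ℝ) (hb0 : 0 < b)
    (hbw : (1 + b) * (finrank ℝ (W.map M.mulVecLin) : ℝ) < (finrank ℝ W : ℝ)) :
    (approxSet m n M b).Infinite := by
  classical
  by_cases hker : ∃ q : Fin (m+n) → ℤ, q ≠ 0 ∧ M.mulVec (fun k => ((q k : ℝ))) = 0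
  · obtain ⟨q, hq, hMq⟩ := hker
    obtain ⟨k0, hk0⟩ := Function.ne_iff.mp hq
    have hk0' : q k0 ≠ 0 := hk0
    refine Set.infinite_of_injective_forall_mem
      (f := fun t : ℕ => fun k => ((t:ℤ)+1) * q k) ?_ ?_
    · intro t t' h
      have := congrFun h k0
      have h2 : (t:ℤ) + 1 = (t':ℤ) + 1 := mul_right_cancel₀ hk0' this
      exact_mod_cast (by omega : (t:ℤ) = t')
    · intro t
      have hcast : (fun k => ((((t:ℤ)+1) * q k : ℤ) : ℝ)) = ((t:ℝ)+1) • (fun k => ((q k : ℝ))) := by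
        funext k
        push_cast
        simp [mul_comm]
      have hne : (fun k => ((((t:ℤ)+1) * q k : ℤ) : ℝ)) ≠ 0 := by
        intro h
        have h3' : ((((t:ℤ)+1) * q k0 : ℤ) : ℝ) = 0 := by simpa using congrFun h k0
        have h3 : ((t:ℤ)+1) * q k0 = 0 := by exact_mod_cast h3' 
        have : (t:ℤ) + 1 ≠ 0 := by omega
        exact hk0' (by
          rcases mul_eq_zero.mp h3 with h4 | h4
          · exact absurd h4 this
          · exact h4)
      show euclNorm _ < euclNorm _ ^ (-b)
      rw [hcast, Matrix.mulVec_smul, hMq, smul_zero, euclNorm_zero]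
      exact Real.rpow_pos_of_pos (euclNorm_pos (hcast ▸ hne)) (-b)
  · push_neg at hker
    intro hfin
    have hpig := pigeon M W hW b hb0 hbw
    have hne : (approxSet m n M b).Nonempty := by
      obtain ⟨N, q, hq0, hq1, -⟩ := hpig.exists
      exact ⟨q, hq1⟩
    set Sf := hfin.toFinset with hSf
    have hSfne : Sf.Nonempty := by
      rwa [hSf, Set.Finite.toFinset_nonempty]
    set ε : ℝ := Sf.inf' hSfne (fun q => euclNorm (M.mulVec fun k => ((q k : ℝ)))) with hε
    have hεpos : 0 < ε := by
      rw [hε, Finset.lt_inf'_iff]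
      intro q hqS
      rcases eq_or_ne q 0 with h0 | h0
      · exfalso
        have hmem : (0 : Fin (m+n) → ℤ) ∈ approxSet m n M b := by
          rw [hSf, Set.Finite.mem_toFinset] at hqS; exact h0 ▸ hqS
        have h1 := hmem
        simp only [approxSet, Set.mem_setOf_eq] at h1
        have h2 : (fun i => (((0 : Fin (m+n) → ℤ) i : ℝ))) = (0 : Fin (m+n) → ℝ) := by
          funext i; simp
        rw [h2] at h1
        simp only [Matrix.mulVec_zero, euclNorm_zero,
          Real.zero_rpow (show -b ≠ 0 by linarith)] at h1
        exact lt_irrefl 0 h1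
      · have hMq0 : M.mulVec (fun k => ((q k : ℝ))) ≠ 0 := hker q h0
        exact euclNorm_pos hMq0
    have htend : Filter.Tendsto (fun N : ℕ => (N:ℝ) ^ (-b)) Filter.atTop (nhds 0) :=
      (tendsto_rpow_neg_atTop hb0).comp tendsto_natCast_atTop_atTop
    have hev2 : ∀ᶠ N : ℕ in Filter.atTop, (N:ℝ) ^ (-b) < ε :=
      htend.eventually_lt_const hεpos
    obtain ⟨N, ⟨q, hq0, hq1, hq2⟩, hNε⟩ := (hpig.and hev2).exists
    have hqS : q ∈ Sf := by rw [hSf, Set.Finite.mem_toFinset]; exact hq1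
    have : ε ≤ euclNorm (M.mulVec fun k => ((q k : ℝ))) :=
      Finset.inf'_le _ hqS
    linarith


theorem stmt15 (m n : ℕ) (W : Submodule ℝ (Fin (m + n) → ℝ))
    (hW : IsRationalSubspace W) (hW0 : W ≠ ⊥) (r : ℕ) (hr : 1 ≤ r)
    (M : Matrix (Fin m) (Fin (m + n)) ℝ) (hM : M ∈ pencil m n W r) :
    ENNReal.ofReal ((Module.finrank ℝ W : ℝ) / r - 1) ≤ dioExp m n M := by
  classical
  set c : ℝ := (finrank ℝ W : ℝ) / r - 1 with hc
  rcases le_or_gt c 0 with hc0 | hc0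
  · rw [ENNReal.ofReal_eq_zero.mpr hc0]
    exact zero_le
  -- main: for each 0 < b < c, ofReal b ≤ dioExp
  have key : ∀ b : ℝ, 0 < b → b < c → ENNReal.ofReal b ≤ dioExp m n M := by
    intro b hb0 hbc
    have hrpos : (0:ℝ) < r := by exact_mod_cast hr
    have hwc : (1 + b) * (r : ℝ) < (finrank ℝ W : ℝ) := by
      have : b + 1 < (finrank ℝ W : ℝ) / r := by rw [hc] at hbc; linarith
      calc (1 + b) * (r:ℝ) < ((finrank ℝ W : ℝ)/r) * r := by
            apply mul_lt_mul_of_pos_right _ hrpos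
            linarith
        _ = (finrank ℝ W : ℝ) := by field_simp
    have hbw : (1 + b) * (finrank ℝ (W.map M.mulVecLin) : ℝ) < (finrank ℝ W : ℝ) := by
      have hVr : (finrank ℝ (W.map M.mulVecLin) : ℝ) ≤ (r:ℝ) := by exact_mod_cast hM
      have h1b : (0:ℝ) < 1 + b := by linarith
      nlinarith
    have hinf := infinite_of_small_b M W hW b hb0 hbw
    exact le_sSup ⟨b, le_of_lt hb0, rfl, hinf⟩
  clear_value c
  refine le_of_forall_lt fun x hx => ?_
  have hxt : x ≠ ⊤ := (hx.trans ENNReal.ofReal_lt_top).ne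
  have hb' : x.toReal < c := (ENNReal.lt_ofReal_iff_toReal_lt hxt).mp hx
  set b : ℝ := (max x.toReal 0 + c) / 2 with hbdef
  have hmax : max x.toReal 0 < c := max_lt hb' hc0
  have hb0 : 0 < b := by
    have : (0:ℝ) ≤ max x.toReal 0 := le_max_right _ _
    rw [hbdef]; linarith
  have hbc : b < c := by rw [hbdef]; linarith
  have hxb : x < ENNReal.ofReal b := by
    rw [ENNReal.lt_ofReal_iff_toReal_lt hxt]
    have : x.toReal ≤ max x.toReal 0 := le_max_left _ _
    rw [hbdef]; linarith
  exact lt_of_lt_of_le hxb (key b hb0 hbc)
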